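/- Let k₁ ≥ 1 be real and let s₁₂, s₂, p₁, p₂ be real. Define h(t) = t^{i s₂ - i p₂ - 1/2} · (1-t)^{k₁ - 1 - i p₁} · ₂F₁(k₁+i s₂+i s₁₂, k₁+i s₂-i s₁₂; 1+2i s₂; t) for t ∈ (0,1/2). Then h is integrable with respect to Lebesgue measure on (0,1/2), and lim_{t → 0⁺} t^{1/2} · |h(t)| = 1; that is, the integrand of I₃(+,C,C) diverges only like t^{-1/2} as t → 0, which is insufficient to prevent convergence at that endpoint. -/

import Mathlib

open Complex Filter Set MeasureTheory Topology

lemma poch_eval_nonneg {A : ℝ} (hA : 0 ≤ A) (n : ℕ) : 0 ≤ (ascPochhammer ℝ n).eval A := by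
  induction n with
  | zero => simp
  | succ n ih => rw [ascPochhammer_succ_eval]; positivity

lemma poch_eval_pos {A : ℝ} (hA : 0 < A) (n : ℕ) : 0 < (ascPochhammer ℝ n).eval A := by
  induction n with
  | zero => simp
  | succ n ih => rw [ascPochhammer_succ_eval]; positivity

lemma poch_abs_le (a : ℂ) (n : ℕ) :
    ‖(ascPochhammer ℂ n).eval a‖ ≤ (ascPochhammer ℝ n).eval ‖a‖ := by
  induction n with
  | zero => simp
  | succ n ih =>
    rw [ascPochhammer_succ_eval, ascPochhammer_succ_eval, norm_mul]
    refine mul_le_mul ih ?_ (norm_nonneg _) (poch_eval_nonneg (norm_nonneg a) n)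
    calc ‖a + n‖ ≤ ‖a‖ + ‖(n : ℂ)‖ := norm_add_le _ _
      _ = ‖a‖ + n := by simp

lemma poch_lower {c : ℂ} (hc : 1 ≤ c.re) (n : ℕ) :
    (n.factorial : ℝ) ≤ ‖(ascPochhammer ℂ n).eval c‖ := by
  induction n with
  | zero => simp
  | succ n ih =>
    rw [ascPochhammer_succ_eval, norm_mul, Nat.factorial_succ, Nat.cast_mul, mul_comm ((n+1:ℕ):ℝ)]
    refine mul_le_mul ih ?_ (by positivity) (norm_nonneg _)
    calc ((n+1 : ℕ) : ℝ) ≤ (c + n).re := by simp; linarith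
      _ ≤ ‖c + n‖ := Complex.re_le_norm _

noncomputable def dcoef (A B : ℝ) (n : ℕ) : ℝ :=
  (ascPochhammer ℝ n).eval A * (ascPochhammer ℝ n).eval B /
    ((n.factorial : ℝ) * (n.factorial : ℝ))

lemma dcoef_pos {A B : ℝ} (hA : 0 < A) (hB : 0 < B) (n : ℕ) : 0 < dcoef A B n := by
  have := poch_eval_pos hA n; have := poch_eval_pos hB n
  have := Nat.factorial_pos n
  unfold dcoef; positivity

lemma dcoef_summable {A B r : ℝ} (hA : 0 < A) (hB : 0 < B) (hr0 : 0 < r) (hr1 : r < 1) :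
    Summable (fun n => dcoef A B n * r ^ n) := by
  set f : ℕ → ℝ := fun n => dcoef A B n * r ^ n with hf
  have hfpos : ∀ n, 0 < f n := fun n => mul_pos (dcoef_pos hA hB n) (pow_pos hr0 n)
  have key : ∀ n : ℕ, ‖f (n+1)‖ / ‖f n‖ = ((A+n)/(n+1)) * ((B+n)/(n+1)) * r := by
    intro n
    rw [Real.norm_of_nonneg (hfpos _).le, Real.norm_of_nonneg (hfpos _).le]
    have h1 : (ascPochhammer ℝ n).eval A ≠ 0 := (poch_eval_pos hA n).ne'
    have h2 : (ascPochhammer ℝ n).eval B ≠ 0 := (poch_eval_pos hB n).ne'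
    have h3 : ((n.factorial : ℝ)) ≠ 0 := Nat.cast_ne_zero.mpr (Nat.factorial_pos n).ne'
    have h4 : ((n:ℝ)+1) ≠ 0 := by positivity
    have h5 : r ^ n ≠ 0 := (pow_pos hr0 n).ne'
    simp only [hf, dcoef, ascPochhammer_succ_eval, Nat.factorial_succ, pow_succ]
    push_cast
    field_simp
  have hlim : ∀ C : ℝ, Tendsto (fun n : ℕ => (C + n)/(n+1)) atTop (𝓝 1) := by
    intro C
    have h1 : Tendsto (fun n : ℕ => ((n:ℝ)+1)) atTop atTop :=
      tendsto_atTop_add_const_right _ 1 tendsto_natCast_atTop_atTop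
    have h0 : Tendsto (fun n : ℕ => (C-1)/((n:ℝ)+1) + 1) atTop (𝓝 1) := by
      have := (tendsto_const_nhds (x := C - 1) (f := atTop (α := ℕ))).div_atTop h1
      simpa using this.add tendsto_const_nhds
    refine h0.congr fun n => ?_
    have h4 : ((n:ℝ)+1) ≠ 0 := by positivity
    field_simp
    ring
  refine summable_of_ratio_test_tendsto_lt_one hr1 (Eventually.of_forall fun n => (hfpos n).ne') ?_
  have : Tendsto (fun n : ℕ => ((A+n)/(n+1)) * ((B+n)/(n+1)) * r) atTop (𝓝 (1 * 1 * r)) :=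
    ((hlim A).mul (hlim B)).mul tendsto_const_nhds
  rw [one_mul, one_mul] at this
  exact Tendsto.congr (fun n => (key n).symm) this

/-- The `n`-th term of the Gauss hypergeometric series `₂F₁(a,b;c;z)`. -/
noncomputable def hypTerm (a b c z : ℂ) (n : ℕ) : ℂ :=
  (ascPochhammer ℂ n).eval a * (ascPochhammer ℂ n).eval b /
    ((ascPochhammer ℂ n).eval c * (n.factorial : ℂ)) * z ^ n

/-- The Gauss hypergeometric function `₂F₁(a,b;c;z)`. -/
noncomputable def hyp (a b c z : ℂ) : ℂ := ∑' n, hypTerm a b c z n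

/-- The integrand of `I₃(+,C,C)`:
`h(t) = t^(is₂-ip₂-1/2) (1-t)^(k₁-1-ip₁) ₂F₁(k₁+is₂+is₁₂, k₁+is₂-is₁₂; 1+2is₂; t)`. -/
noncomputable def hPCC (k₁ s₁₂ s₂ p₁ p₂ : ℝ) (t : ℝ) : ℂ :=
  ((t : ℝ) : ℂ) ^ (I * (s₂ : ℂ) - I * (p₂ : ℂ) - 1 / 2) *
    ((1 - t : ℝ) : ℂ) ^ ((k₁ : ℂ) - 1 - I * (p₁ : ℂ)) *
    hyp ((k₁ : ℂ) + I * (s₂ : ℂ) + I * (s₁₂ : ℂ))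
      ((k₁ : ℂ) + I * (s₂ : ℂ) - I * (s₁₂ : ℂ)) (1 + 2 * I * (s₂ : ℂ)) t

lemma hypTerm_abs_le {a b c : ℂ} (hc : 1 ≤ c.re) {t : ℝ} (ht : 0 ≤ t) (n : ℕ) :
    ‖hypTerm a b c t n‖ ≤ dcoef ‖a‖ ‖b‖ n * t ^ n := by
  have habs : ‖hypTerm a b c (t:ℂ) n‖ =
      ‖(ascPochhammer ℂ n).eval a‖ * ‖(ascPochhammer ℂ n).eval b‖ /
        (‖(ascPochhammer ℂ n).eval c‖ * (n.factorial : ℝ)) * t ^ n := by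
    rw [hypTerm, norm_mul, norm_div, norm_mul, norm_mul, norm_pow,
      Complex.norm_natCast, Complex.norm_real, Real.norm_of_nonneg ht]
  rw [habs]
  refine mul_le_mul_of_nonneg_right ?_ (pow_nonneg ht n)
  unfold dcoef
  have hfac : (0:ℝ) < (n.factorial : ℝ) := by exact_mod_cast Nat.factorial_pos n
  refine div_le_div₀ (mul_nonneg (poch_eval_nonneg (norm_nonneg a) n)
    (poch_eval_nonneg (norm_nonneg b) n)) ?_ (by positivity) ?_
  · exact mul_le_mul (poch_abs_le a n) (poch_abs_le b n) (norm_nonneg _)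
      (poch_eval_nonneg (norm_nonneg a) n)
  · exact mul_le_mul_of_nonneg_right (poch_lower hc n) hfac.le

/-- For `k₁ ≥ 1`, the integrand of `I₃(+,C,C)` is integrable on `(0,1/2)` and diverges
only like `t^(-1/2)` as `t → 0⁺`. -/
theorem integral_PCC_I3_first_piece (k₁ s₁₂ s₂ p₁ p₂ : ℝ) (h1 : 1 ≤ k₁) :
    IntegrableOn (hPCC k₁ s₁₂ s₂ p₁ p₂) (Ioo 0 (1 / 2)) volume ∧
    Tendsto (fun t : ℝ => t ^ ((1 : ℝ) / 2) * ‖hPCC k₁ s₁₂ s₂ p₁ p₂ t‖)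
      (nhdsWithin 0 (Ioi 0)) (nhds 1) := by
  set a : ℂ := (k₁ : ℂ) + I * (s₂ : ℂ) + I * (s₁₂ : ℂ) with ha
  set b : ℂ := (k₁ : ℂ) + I * (s₂ : ℂ) - I * (s₁₂ : ℂ) with hb
  set c : ℂ := 1 + 2 * I * (s₂ : ℂ) with hc
  have hcre : 1 ≤ c.re := by simp [hc]
  have hare : a.re = k₁ := by simp [ha]
  have hbre : b.re = k₁ := by simp [hb]
  have hA : 0 < ‖a‖ := lt_of_lt_of_le one_pos (le_trans (hare ▸ h1) (Complex.re_le_norm a))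
  have hB : 0 < ‖b‖ := lt_of_lt_of_le one_pos (le_trans (hbre ▸ h1) (Complex.re_le_norm b))
  set u : ℕ → ℝ := fun n => dcoef ‖a‖ ‖b‖ n * (1/2) ^ n with hu'
  have hu : Summable u := dcoef_summable hA hB (by norm_num) (by norm_num)
  have hbound : ∀ (n : ℕ) (t : ℝ), t ∈ Icc (0:ℝ) (1/2) → ‖hypTerm a b c t n‖ ≤ u n := by
    intro n t ht
    refine le_trans (hypTerm_abs_le hcre ht.1 n) ?_
    exact mul_le_mul_of_nonneg_left (pow_le_pow_left₀ ht.1 ht.2 n) (dcoef_pos hA hB n).le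
  have hcont : ContinuousOn (fun t : ℝ => hyp a b c t) (Icc (0:ℝ) (1/2)) := by
    unfold hyp
    refine continuousOn_tsum (fun n => ?_) hu (fun n t ht => hbound n t ht)
    unfold hypTerm
    exact (continuous_const.mul (Complex.continuous_ofReal.pow n)).continuousOn
  have hyp0 : hyp a b c 0 = 1 := by
    unfold hyp
    rw [tsum_eq_single 0 (fun n hn => by simp [hypTerm, zero_pow hn])]
    simp [hypTerm]
  have hyptend : Tendsto (fun t : ℝ => hyp a b c t) (𝓝[>] (0:ℝ)) (𝓝 1) := by
    have h := (hcont 0 (by constructor <;> norm_num)).mono_left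
      (nhdsWithin_mono 0 Ioo_subset_Icc_self)
    rw [nhdsWithin_Ioo_eq_nhdsGT (by norm_num : (0:ℝ) < 1/2)] at h
    simpa [hyp0] using h
  set M : ℝ := ∑' n, u n with hM'
  have hMnn : 0 ≤ M := tsum_nonneg fun n => (mul_pos (dcoef_pos hA hB n) (by positivity)).le
  have hMb : ∀ t ∈ Icc (0:ℝ) (1/2), ‖hyp a b c t‖ ≤ M := by
    intro t ht
    have hsn : Summable (fun n => ‖hypTerm a b c t n‖) :=
      Summable.of_nonneg_of_le (fun n => norm_nonneg _) (fun n => hbound n t ht) hu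
    calc ‖hyp a b c t‖ = ‖∑' n, hypTerm a b c (t:ℂ) n‖ := rfl
      _ ≤ ∑' n, ‖hypTerm a b c (t:ℂ) n‖ := norm_tsum_le_tsum_norm hsn
      _ ≤ M := Summable.tsum_le_tsum (fun n => hbound n t ht) hsn hu
  have habs : ∀ t ∈ Ioo (0:ℝ) (1/2), ‖hPCC k₁ s₁₂ s₂ p₁ p₂ t‖ =
      t ^ (-(1/2) : ℝ) * (1-t) ^ (k₁ - 1) * ‖hyp a b c t‖ := by
    intro t ht
    rw [hPCC, norm_mul, norm_mul, Complex.norm_cpow_eq_rpow_re_of_pos ht.1,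
      Complex.norm_cpow_eq_rpow_re_of_pos (by linarith [ht.2] : (0:ℝ) < 1 - t)]
    congr 2
    · norm_num
    · norm_num
  have hcontPCC : ContinuousOn (hPCC k₁ s₁₂ s₂ p₁ p₂) (Ioo 0 (1/2)) := by
    intro t ht
    refine ContinuousWithinAt.mul (ContinuousWithinAt.mul ?_ ?_) ?_
    · exact (ContinuousAt.cpow (Complex.continuous_ofReal.continuousAt) continuousAt_const
        (Or.inl (by simpa using ht.1))).continuousWithinAt
    · exact (ContinuousAt.cpow ((Complex.continuous_ofReal.comp
        (continuous_const.sub continuous_id)).continuousAt) continuousAt_const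
        (Or.inl (by simpa using (by linarith [ht.2] : (0:ℝ) < 1 - t)))).continuousWithinAt
    · exact (hcont t (Ioo_subset_Icc_self ht)).mono Ioo_subset_Icc_self
  constructor
  · have hg : IntegrableOn (fun t : ℝ => M * t ^ (-(1/2) : ℝ)) (Ioo 0 (1/2)) volume := by
      have hii : IntervalIntegrable (fun x : ℝ => x ^ (-(1/2) : ℝ)) volume 0 (1/2) :=
        intervalIntegral.intervalIntegrable_rpow' (by norm_num)
      rw [intervalIntegrable_iff_integrableOn_Ioc_of_le (by norm_num)] at hii
      exact (hii.mono_set Ioo_subset_Ioc_self).const_mul M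
    refine Integrable.mono' hg (hcontPCC.aestronglyMeasurable measurableSet_Ioo) ?_
    filter_upwards [ae_restrict_mem measurableSet_Ioo] with t ht
    rw [habs t ht]
    have h01 : (0:ℝ) ≤ 1 - t := by linarith [ht.2]
    have hle1 : (1-t) ^ (k₁ - 1) ≤ 1 :=
      Real.rpow_le_one h01 (by linarith [ht.1]) (by linarith)
    have hhM : ‖hyp a b c t‖ ≤ M := hMb t (Ioo_subset_Icc_self ht)
    have htn : (0:ℝ) ≤ t ^ (-(1/2) : ℝ) := Real.rpow_nonneg ht.1.le _
    calc t ^ (-(1/2) : ℝ) * (1-t) ^ (k₁ - 1) * ‖hyp a b c t‖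
        ≤ t ^ (-(1/2) : ℝ) * 1 * M := by
          gcongr
      _ = M * t ^ (-(1/2) : ℝ) := by ring
  · have heq : ∀ᶠ t in 𝓝[>] (0:ℝ), t ^ ((1:ℝ)/2) * ‖hPCC k₁ s₁₂ s₂ p₁ p₂ t‖ =
        (1-t) ^ (k₁ - 1) * ‖hyp a b c t‖ := by
      filter_upwards [Ioo_mem_nhdsGT_of_mem (by constructor <;> norm_num :
        (0:ℝ) ∈ Ico (0:ℝ) (1/2))] with t ht
      rw [habs t ht]
      have h0 : t ^ ((1:ℝ)/2) * t ^ (-(1/2) : ℝ) = 1 := by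
        rw [← Real.rpow_add ht.1]
        norm_num
      calc t ^ ((1:ℝ)/2) * (t ^ (-(1/2) : ℝ) * (1-t) ^ (k₁ - 1) * ‖hyp a b c t‖)
          = (t ^ ((1:ℝ)/2) * t ^ (-(1/2) : ℝ)) * ((1-t) ^ (k₁ - 1) * ‖hyp a b c t‖) := by
            ring
        _ = (1-t) ^ (k₁ - 1) * ‖hyp a b c t‖ := by rw [h0, one_mul]
    rw [tendsto_congr' heq]
    have h1 : Tendsto (fun t : ℝ => (1-t) ^ (k₁ - 1)) (𝓝[>] (0:ℝ)) (𝓝 1) := by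
      have hsub : Tendsto (fun t : ℝ => 1 - t) (𝓝[>] (0:ℝ)) (𝓝 1) := by
        have hc1 : Continuous fun t : ℝ => 1 - t := by fun_prop
        have h := (hc1.tendsto 0).mono_left (nhdsWithin_le_nhds (s := Ioi (0:ℝ)))
        simpa using h
      have hrc : ContinuousAt (fun x : ℝ => x ^ (k₁ - 1)) 1 :=
        Real.continuousAt_rpow_const 1 (k₁ - 1) (Or.inl one_ne_zero)
      have := hrc.tendsto.comp hsub
      simpa [Real.one_rpow, Function.comp_def] using this
    have h2 : Tendsto (fun t : ℝ => ‖hyp a b c t‖) (𝓝[>] (0:ℝ)) (𝓝 1) := by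
      have := (continuous_norm.tendsto 1).comp hyptend
      simpa [Function.comp_def] using this
    have := h1.mul h2
    simpa using this
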